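/- arXiv:2102.09353 — 4 statements merged into one kernel-verified Lean document; each statement's English description precedes it below -/
import Mathlib

section
/- The function J(η) = (1/π) ∫_0^1 x^{(q-1)/2} / sqrt((1-x) ∏_{i=1}^q (x+η_i)) dx, defined on vectors η = (η_1,...,η_q) with strictly positive entries, is Schur convex: if η majorizes η', then J(η) ≥ J(η'). -/
/-- The function `J(η) = (1/π) ∫₀¹ x^((q-1)/2) / √((1-x) ∏ (x+ηᵢ)) dx`. -/
noncomputable def J (q : ℕ) (η : Fin q → ℝ) : ℝ :=
  (1 / Real.pi) * ∫ x in Set.Ioo (0 : ℝ) 1,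
    x ^ (((q : ℝ) - 1) / 2) / Real.sqrt ((1 - x) * ∏ i : Fin q, (x + η i))

/-- `b` majorizes `a`: after sorting both in descending order, the partial sums of `a`
are dominated by those of `b`, with equal total sums. -/
def Majorizes {q : ℕ} (b a : Fin q → ℝ) : Prop :=
  ∃ σ τ : Equiv.Perm (Fin q),
    Antitone (fun i => a (σ i)) ∧ Antitone (fun i => b (τ i)) ∧
    (∀ j : Fin q, ∑ i : Fin q, (if i ≤ j then a (σ i) else 0) ≤
        ∑ i : Fin q, (if i ≤ j then b (τ i) else 0)) ∧
    (∑ i : Fin q, a i = ∑ i : Fin q, b i)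

open Finset Set MeasureTheory

/-- Partial sums over Fin translated to sums over ranges. -/
lemma partial_eq {q : ℕ} (a : Fin q → ℝ) (j : Fin q) :
    ∑ i : Fin q, (if i ≤ j then a i else 0)
      = ∑ i ∈ Finset.range (j.1 + 1), (if h : i < q then a ⟨i, h⟩ else 0) := by
  have h1 : ∑ i : Fin q, (if i ≤ j then a i else 0)
      = ∑ i ∈ Finset.range q,
          (if h : i < q then (if i ≤ j.1 then a ⟨i, h⟩ else 0) else 0) := by
    rw [← Fin.sum_univ_eq_sum_range]
    refine Finset.sum_congr rfl fun i _ => ?_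
    rw [dif_pos i.isLt]
    simp only [Fin.eta]
    congr 1
  rw [h1]
  rw [← Finset.sum_subset (Finset.range_subset_range.mpr j.isLt : Finset.range (j.1+1) ⊆ Finset.range q)]
  · refine Finset.sum_congr rfl fun i hi => ?_
    have hij : i ≤ j.1 := Nat.lt_succ_iff.mp (Finset.mem_range.mp hi)
    have hiq : i < q := lt_of_le_of_lt hij j.isLt
    rw [dif_pos hiq, dif_pos hiq, if_pos hij]
  · intro i hi hni
    have : ¬ i ≤ j.1 := fun h => hni (Finset.mem_range.mpr (Nat.lt_succ_of_le h))
    by_cases h : i < q <;> simp [h, this]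

/-- Abel-summation consequence of the majorization inequalities. -/
lemma abel_nonpos {q : ℕ} (a b : Fin q → ℝ) (ha : Antitone a)
    (hpart : ∀ j : Fin q, ∑ i : Fin q, (if i ≤ j then a i else 0) ≤
        ∑ i : Fin q, (if i ≤ j then b i else 0))
    (htot : ∑ i, a i = ∑ i, b i)
    (x : ℝ) (hxa : ∀ i, 0 < x + a i) :
    ∑ i : Fin q, (x + a i)⁻¹ * (b i - a i) ≤ 0 := by
  set c : ℕ → ℝ := fun n => if h : n < q then (x + a ⟨n, h⟩)⁻¹ else 0 with hc
  set g : ℕ → ℝ := fun n => if h : n < q then b ⟨n, h⟩ - a ⟨n, h⟩ else 0 with hg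
  have key : ∑ i : Fin q, (x + a i)⁻¹ * (b i - a i) = ∑ i ∈ Finset.range q, c i • g i := by
    rw [← Fin.sum_univ_eq_sum_range]
    refine Finset.sum_congr rfl fun i _ => ?_
    simp [hc, hg, i.isLt, smul_eq_mul]
  rw [key, Finset.sum_range_by_parts]
  have hGq : ∑ i ∈ Finset.range q, g i = 0 := by
    rw [← Fin.sum_univ_eq_sum_range]
    have : ∑ i : Fin q, g i = ∑ i : Fin q, (b i - a i) := by
      refine Finset.sum_congr rfl fun i _ => ?_
      simp [hg, i.isLt]
    rw [this, Finset.sum_sub_distrib, htot, sub_self]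
  rw [hGq, smul_zero, zero_sub, neg_nonpos]
  refine Finset.sum_nonneg fun i hi => ?_
  have hi1 : i + 1 < q := by
    have := Finset.mem_range.mp hi; omega
  have hiq : i < q := by omega
  refine smul_nonneg ?_ ?_
  · -- c (i+1) - c i ≥ 0
    have hle : a ⟨i+1, hi1⟩ ≤ a ⟨i, hiq⟩ := ha (by simp [Fin.le_def])
    have h1 : (0:ℝ) < x + a ⟨i+1, hi1⟩ := hxa _
    have : (x + a ⟨i, hiq⟩)⁻¹ ≤ (x + a ⟨i+1, hi1⟩)⁻¹ := by
      apply inv_anti₀ h1 (by linarith)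
    simp only [hc, dif_pos hi1, dif_pos hiq]
    linarith
  · -- partial sum of g over range (i+1) nonneg
    have hj : i < q := hiq
    have := hpart ⟨i, hj⟩
    rw [partial_eq a ⟨i, hj⟩, partial_eq b ⟨i, hj⟩] at this
    have hsum : ∑ k ∈ Finset.range (i + 1), g k
        = ∑ k ∈ Finset.range (i+1), (if h : k < q then b ⟨k, h⟩ else 0)
          - ∑ k ∈ Finset.range (i+1), (if h : k < q then a ⟨k, h⟩ else 0) := by
      rw [← Finset.sum_sub_distrib]
      refine Finset.sum_congr rfl fun k hk => ?_
      have hkq : k < q := lt_of_lt_of_le (Finset.mem_range.mp hk) (by omega)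
      simp [hg, hkq]
    rw [hsum]
    linarith

/-- Sum of logs inequality from majorization. -/
lemma sum_log_le {q : ℕ} (a b : Fin q → ℝ) (ha : Antitone a)
    (hpart : ∀ j : Fin q, ∑ i : Fin q, (if i ≤ j then a i else 0) ≤
        ∑ i : Fin q, (if i ≤ j then b i else 0))
    (htot : ∑ i, a i = ∑ i, b i)
    (x : ℝ) (hxa : ∀ i, 0 < x + a i) (hxb : ∀ i, 0 < x + b i) :
    ∑ i : Fin q, Real.log (x + b i) ≤ ∑ i : Fin q, Real.log (x + a i) := by
  have habel := abel_nonpos a b ha hpart htot x hxa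
  have hterm : ∀ i : Fin q, Real.log (x + b i) - Real.log (x + a i)
      ≤ (x + a i)⁻¹ * (b i - a i) := by
    intro i
    have h1 : (0:ℝ) < (x + b i) / (x + a i) := div_pos (hxb i) (hxa i)
    have h2 := Real.log_le_sub_one_of_pos h1
    rw [Real.log_div (ne_of_gt (hxb i)) (ne_of_gt (hxa i))] at h2
    have h3 : (x + b i) / (x + a i) - 1 = (x + a i)⁻¹ * (b i - a i) := by
      rw [div_sub_one (ne_of_gt (hxa i)), add_sub_add_left_eq_sub, div_eq_inv_mul]
    linarith [h3 ▸ h2]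
  have := Finset.sum_le_sum (fun i (_ : i ∈ Finset.univ) => hterm i)
  rw [Finset.sum_sub_distrib] at this
  linarith

/-- Product inequality from majorization. -/
lemma prod_le_of_maj {q : ℕ} (η η' : Fin q → ℝ)
    (hη : ∀ i, 0 < η i) (hη' : ∀ i, 0 < η' i)
    (hmaj : Majorizes η η') (x : ℝ) (hx : 0 ≤ x) :
    ∏ i : Fin q, (x + η i) ≤ ∏ i : Fin q, (x + η' i) := by
  obtain ⟨σ, τ, hA, hB, hpart, htot⟩ := hmaj
  set a : Fin q → ℝ := fun i => η' (σ i) with hadef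
  set b : Fin q → ℝ := fun i => η (τ i) with hbdef
  have hxa : ∀ i, 0 < x + a i := fun i => add_pos_of_nonneg_of_pos hx (hη' _)
  have hxb : ∀ i, 0 < x + b i := fun i => add_pos_of_nonneg_of_pos hx (hη _)
  have htot' : ∑ i, a i = ∑ i, b i := by
    rw [hadef, hbdef]
    simp only [Equiv.sum_comp σ η', Equiv.sum_comp τ η]
    exact htot
  have hlog := sum_log_le a b hA hpart htot' x hxa hxb
  have e1 : ∏ i : Fin q, (x + η i) = Real.exp (∑ i : Fin q, Real.log (x + b i)) := by
    rw [Real.exp_sum]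
    rw [← Equiv.prod_comp τ (fun i => x + η i)]
    exact Finset.prod_congr rfl fun i _ => (Real.exp_log (hxb i)).symm
  have e2 : ∏ i : Fin q, (x + η' i) = Real.exp (∑ i : Fin q, Real.log (x + a i)) := by
    rw [Real.exp_sum]
    rw [← Equiv.prod_comp σ (fun i => x + η' i)]
    exact Finset.prod_congr rfl fun i _ => (Real.exp_log (hxa i)).symm
  rw [e1, e2]
  exact Real.exp_le_exp.mpr hlog

/-- Integrability of the integrand. -/
lemma integrable_J_aux {q : ℕ} (hq : q ≠ 0) (η : Fin q → ℝ) (hη : ∀ i, 0 < η i) :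
    IntegrableOn (fun x => x ^ (((q : ℝ) - 1) / 2) /
      Real.sqrt ((1 - x) * ∏ i : Fin q, (x + η i))) (Set.Ioo (0:ℝ) 1) := by
  have hprod : (0:ℝ) < ∏ i : Fin q, η i := Finset.prod_pos fun i _ => hη i
  set C : ℝ := (Real.sqrt (∏ i : Fin q, η i))⁻¹ with hC
  have hC0 : 0 ≤ C := inv_nonneg.2 (Real.sqrt_nonneg _)
  -- integrable dominating function
  have hdom : IntegrableOn (fun x : ℝ => C * (1 - x) ^ (-(1/2) : ℝ)) (Set.Ioo (0:ℝ) 1) := by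
    have h1 : IntervalIntegrable (fun x : ℝ => x ^ (-(1/2) : ℝ)) volume 0 1 :=
      intervalIntegral.intervalIntegrable_rpow' (by norm_num)
    have h2 := h1.comp_sub_left 1
    simp only [sub_zero, sub_self] at h2
    have h3 : IntegrableOn (fun x : ℝ => (1 - x) ^ (-(1/2) : ℝ)) (Set.Ioo (0:ℝ) 1) := by
      rw [← intervalIntegrable_iff_integrableOn_Ioo_of_le zero_le_one]
      exact h2.symm
    exact h3.const_mul C
  refine hdom.integrable.mono ?_ ?_
  · -- measurability
    apply Measurable.aestronglyMeasurable
    have hp0 : (0:ℝ) ≤ ((q : ℝ) - 1) / 2 := by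
      have : (1:ℝ) ≤ (q:ℝ) := by exact_mod_cast Nat.one_le_iff_ne_zero.mpr hq
      linarith
    apply Measurable.div
    · exact (Real.continuous_rpow_const hp0).measurable
    · apply (Real.continuous_sqrt.comp ?_).measurable
      apply Continuous.mul
      · exact continuous_const.sub continuous_id
      · exact continuous_finset_prod _ fun i _ => continuous_id.add continuous_const
  · -- a.e. bound
    rw [ae_restrict_iff' measurableSet_Ioo]
    filter_upwards with x hx
    obtain ⟨hx0, hx1⟩ := hx
    have h1x : (0:ℝ) < 1 - x := by linarith
    have hpx : (0:ℝ) < ∏ i : Fin q, (x + η i) :=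
      Finset.prod_pos fun i _ => by linarith [hη i]
    have hnum : x ^ (((q : ℝ) - 1) / 2) ≤ 1 := by
      apply Real.rpow_le_one hx0.le hx1.le
      have : (1:ℝ) ≤ (q:ℝ) := by exact_mod_cast Nat.one_le_iff_ne_zero.mpr hq
      linarith
    have hnum0 : 0 ≤ x ^ (((q : ℝ) - 1) / 2) := Real.rpow_nonneg hx0.le _
    have hple : ∏ i : Fin q, η i ≤ ∏ i : Fin q, (x + η i) :=
      Finset.prod_le_prod (fun i _ => (hη i).le) (fun i _ => by linarith)
    have hsq : Real.sqrt ((1 - x) * ∏ i : Fin q, η i)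
        ≤ Real.sqrt ((1 - x) * ∏ i : Fin q, (x + η i)) := by
      apply Real.sqrt_le_sqrt
      exact mul_le_mul_of_nonneg_left hple h1x.le
    have hsqpos : 0 < Real.sqrt ((1 - x) * ∏ i : Fin q, η i) :=
      Real.sqrt_pos.mpr (mul_pos h1x hprod)
    have hClose : (Real.sqrt ((1 - x) * ∏ i : Fin q, η i))⁻¹
        = C * (1 - x) ^ (-(1/2) : ℝ) := by
      rw [Real.sqrt_mul h1x.le, mul_inv, Real.rpow_neg h1x.le, ← Real.sqrt_eq_rpow]
      ring
    have hfle : x ^ (((q : ℝ) - 1) / 2) / Real.sqrt ((1 - x) * ∏ i : Fin q, (x + η i))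
        ≤ C * (1 - x) ^ (-(1/2) : ℝ) := by
      calc x ^ (((q : ℝ) - 1) / 2) / Real.sqrt ((1 - x) * ∏ i : Fin q, (x + η i))
          ≤ 1 / Real.sqrt ((1 - x) * ∏ i : Fin q, η i) :=
            div_le_div₀ zero_le_one hnum hsqpos hsq
        _ = C * (1 - x) ^ (-(1/2) : ℝ) := by rw [one_div, hClose]
    have hf0 : 0 ≤ x ^ (((q : ℝ) - 1) / 2) /
        Real.sqrt ((1 - x) * ∏ i : Fin q, (x + η i)) :=
      div_nonneg hnum0 (Real.sqrt_nonneg _)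
    have hg0 : 0 ≤ C * (1 - x) ^ (-(1/2) : ℝ) :=
      mul_nonneg hC0 (Real.rpow_nonneg h1x.le _)
    rw [Real.norm_of_nonneg hf0, Real.norm_of_nonneg hg0]
    exact hfle

/-- Schur convexity of `J` on vectors with strictly positive entries:
if `η` majorizes `η'` then `J(η) ≥ J(η')`. -/
theorem stmt1 (q : ℕ) (η η' : Fin q → ℝ)
    (hη : ∀ i, 0 < η i) (hη' : ∀ i, 0 < η' i)
    (hmaj : Majorizes η η') :
    J q η' ≤ J q η := by
  rcases Nat.eq_zero_or_pos q with hq | hq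
  · subst hq
    have : η = η' := funext fun i => i.elim0
    rw [this]
  · have hqne : q ≠ 0 := hq.ne'
    unfold J
    apply mul_le_mul_of_nonneg_left _ (by positivity : (0:ℝ) ≤ 1 / Real.pi)
    apply MeasureTheory.setIntegral_mono_on (integrable_J_aux hqne η' hη')
      (integrable_J_aux hqne η hη) measurableSet_Ioo
    intro x hx
    obtain ⟨hx0, hx1⟩ := hx
    have h1x : (0:ℝ) < 1 - x := by linarith
    have hnum0 : 0 ≤ x ^ (((q : ℝ) - 1) / 2) := Real.rpow_nonneg hx0.le _
    have hpos : (0:ℝ) < ∏ i : Fin q, (x + η i) :=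
      Finset.prod_pos fun i _ => by linarith [hη i]
    have hple := prod_le_of_maj η η' hη hη' hmaj x hx0.le
    apply div_le_div_of_nonneg_left hnum0
    · exact Real.sqrt_pos.mpr (mul_pos h1x hpos)
    · exact Real.sqrt_le_sqrt (mul_le_mul_of_nonneg_left hple h1x.le)
end

section
/- For the function J(η) with positive entries η_i, the Schur–Ostrowski condition holds: for all indices i, j, (η_i − η_j)(∂J/∂η_i − ∂J/∂η_j) ≥ 0. In particular, for J̃(η_i, η_j; x) = (x+η_i)^{-1/2}(x+η_j)^{-1/2} with x > 0, one has (η_i − η_j)(∂J̃/∂η_i − ∂J̃/∂η_j) = (η_i − η_j)² / (2(x+η_i)^{3/2}(x+η_j)^{3/2}) ≥ 0. -/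
open MeasureTheory Set Metric

theorem hasDerivAt_integral_div_sqrt_add {μ : Measure ℝ} {C : ℝ → ℝ} (hC : Integrable C μ)
    (hμ : ∀ᵐ x ∂μ, 0 ≤ x) {t₀ : ℝ} (ht₀ : 0 < t₀) :
    HasDerivAt (fun t => ∫ x, C x / √(x + t) ∂μ)
      (∫ x, -(C x / √(x + t₀) / (2 * (x + t₀))) ∂μ) t₀ := by
  have hball : ∀ x, 0 ≤ x → ∀ t ∈ ball t₀ (t₀ / 2), t₀ / 2 ≤ x + t := by
    intro x hx t ht
    rw [mem_ball, Real.dist_eq, abs_lt] at ht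
    linarith
  have hmeas : ∀ t, AEStronglyMeasurable (fun x => C x / √(x + t)) μ := fun t =>
    hC.aestronglyMeasurable.div₀
      (by fun_prop : Continuous fun x => √(x + t)).aestronglyMeasurable
  refine (hasDerivAt_integral_of_dominated_loc_of_deriv_le
    (F' := fun t x => -(C x / √(x + t) / (2 * (x + t)))) (ball_mem_nhds t₀ (half_pos ht₀))
    (.of_forall hmeas) ?_ ?_ ?_
    ((hC.norm.div_const √(t₀ / 2)).div_const (2 * (t₀ / 2))) ?_).2
  · refine (hC.norm.div_const √t₀).mono' (hmeas t₀) ?_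
    filter_upwards [hμ] with x hx
    rw [norm_div, Real.norm_of_nonneg (Real.sqrt_nonneg _)]
    gcongr
    linarith
  · exact ((hmeas t₀).div₀
      (by fun_prop : Continuous fun x => 2 * (x + t₀)).aestronglyMeasurable).neg
  · filter_upwards [hμ] with x hx t ht
    have := hball x hx t ht
    rw [norm_neg, norm_div, norm_div, Real.norm_of_nonneg (Real.sqrt_nonneg _),
      Real.norm_of_nonneg (show (0 : ℝ) ≤ 2 * (x + t) by linarith)]
    gcongr
  · filter_upwards [hμ] with x hx t ht
    have hxt : 0 < x + t := by linarith [hball x hx t ht]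
    have hs : 0 < √(x + t) := Real.sqrt_pos.mpr hxt
    refine ((hasDerivAt_const t (C x)).div (((hasDerivAt_id t).const_add x).sqrt hxt.ne')
      hs.ne').congr_deriv ?_
    have hsq : √(x + t) ^ 2 = x + t := Real.sq_sqrt hxt.le
    simp only [id, zero_mul, zero_sub, hsq]
    field_simp

lemma integrableOn_inv_sqrt_one_sub :
    IntegrableOn (fun x : ℝ => (√(1 - x))⁻¹) (Ioo 0 1) := by
  have h := ((intervalIntegral.intervalIntegrable_rpow' (r := -(1 / 2)) (a := 0) (b := 1)
    (by norm_num)).comp_sub_left 1).symm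
  rw [sub_zero, sub_self, intervalIntegrable_iff_integrableOn_Ioc_of_le zero_le_one] at h
  refine (h.mono_set Ioo_subset_Ioc_self).congr_fun (fun x hx => ?_) measurableSet_Ioo
  rw [Real.sqrt_eq_rpow, ← Real.rpow_neg (by linarith [hx.2])]

noncomputable def jIntegrand (q : ℕ) (η : Fin q → ℝ) (s : Finset (Fin q)) (x : ℝ) : ℝ :=
  x ^ (((q : ℝ) - 1) / 2) / √((1 - x) * ∏ l ∈ s, (x + η l))

section jIntegrand

variable {q : ℕ} {η : Fin q → ℝ}

lemma J_eq_integral_jIntegrand :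
    J q η = (1 / Real.pi) * ∫ x in Ioo 0 1, jIntegrand q η Finset.univ x :=
  rfl

lemma jIntegrand_nonneg (s : Finset (Fin q)) {x : ℝ} (hx : 0 ≤ x) :
    0 ≤ jIntegrand q η s x := by
  unfold jIntegrand
  positivity

lemma jIntegrand_le (hη : ∀ i, 0 < η i) (hq : 0 < q) (s : Finset (Fin q)) {x : ℝ}
    (hx : x ∈ Ioo 0 1) :
    jIntegrand q η s x ≤ (√(∏ l ∈ s, η l))⁻¹ * (√(1 - x))⁻¹ := by
  have hq' : (1 : ℝ) ≤ q := by exact_mod_cast hq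
  have h1x : 0 < 1 - x := by linarith [hx.2]
  calc jIntegrand q η s x ≤ 1 / √((1 - x) * ∏ l ∈ s, η l) := by
        unfold jIntegrand
        gcongr with l
        · exact Real.sqrt_pos.mpr (mul_pos h1x (Finset.prod_pos fun l _ => hη l))
        · exact Real.rpow_le_one hx.1.le hx.2.le (by linarith)
        · exact fun l _ => (hη l).le
        · linarith [hx.1]
    _ = _ := by rw [Real.sqrt_mul h1x.le, one_div, mul_inv, mul_comm]

lemma integrableOn_jIntegrand (hη : ∀ i, 0 < η i) (hq : 0 < q) (s : Finset (Fin q)) :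
    IntegrableOn (jIntegrand q η s) (Ioo 0 1) := by
  refine (integrableOn_inv_sqrt_one_sub.const_mul (√(∏ l ∈ s, η l))⁻¹).mono'
    (by unfold jIntegrand; fun_prop : Measurable (jIntegrand q η s)).aestronglyMeasurable ?_
  filter_upwards [ae_restrict_mem measurableSet_Ioo] with x hx
  rw [Real.norm_of_nonneg (jIntegrand_nonneg s hx.1.le)]
  exact jIntegrand_le hη hq s hx

lemma integrableOn_jIntegrand_div (hη : ∀ i, 0 < η i) (hq : 0 < q) (k : Fin q) :
    IntegrableOn (fun x => jIntegrand q η Finset.univ x / (2 * (x + η k))) (Ioo 0 1) := by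
  simp only [div_eq_mul_inv]
  refine (integrableOn_jIntegrand hη hq _).mul_bdd (c := (2 * η k)⁻¹) (by fun_prop) ?_
  filter_upwards [ae_restrict_mem measurableSet_Ioo] with x hx
  have := hη k
  rw [norm_inv, Real.norm_of_nonneg (by linarith [hx.1])]
  gcongr
  linarith [hx.1]

lemma jIntegrand_update_univ (k : Fin q) {t x : ℝ} (hxt : 0 ≤ x + t) :
    jIntegrand q (Function.update η k t) Finset.univ x
      = jIntegrand q η (Finset.univ.erase k) x / √(x + t) := by
  have hprod : ∏ l, (x + Function.update η k t l)
      = (x + t) * ∏ l ∈ Finset.univ.erase k, (x + η l) := by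
    rw [← Finset.mul_prod_erase _ _ (Finset.mem_univ k), Function.update_self]
    exact congrArg _ (Finset.prod_congr rfl fun l hl => by
      rw [Function.update_of_ne (Finset.ne_of_mem_erase hl)])
  unfold jIntegrand
  rw [hprod, mul_left_comm, Real.sqrt_mul hxt, div_mul_eq_div_div_swap]

lemma hasDerivAt_J_update (hη : ∀ i, 0 < η i) (k : Fin q) :
    HasDerivAt (fun t => J q (Function.update η k t))
      ((1 / Real.pi) * ∫ x in Ioo 0 1, -(jIntegrand q η Finset.univ x / (2 * (x + η k))))
      (η k) := by
  have hμ : ∀ᵐ x ∂(volume.restrict (Ioo (0 : ℝ) 1)), 0 ≤ x :=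
    ae_restrict_of_forall_mem measurableSet_Ioo fun x hx => hx.1.le
  have hd := (hasDerivAt_integral_div_sqrt_add
    (integrableOn_jIntegrand hη k.pos (Finset.univ.erase k)) hμ (hη k)).const_mul (1 / Real.pi)
  refine (hd.congr_of_eventuallyEq ?_).congr_deriv ?_
  · filter_upwards [eventually_gt_nhds (hη k)] with t ht
    rw [J_eq_integral_jIntegrand]
    congr 1
    exact setIntegral_congr_fun measurableSet_Ioo fun x hx =>
      jIntegrand_update_univ k (by linarith [hx.1])
  · congr 1
    refine setIntegral_congr_fun measurableSet_Ioo fun x hx => ?_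
    rw [← jIntegrand_update_univ k (by linarith [hx.1, hη k]), Function.update_eq_self]

lemma J_schur_ostrowski (hη : ∀ i, 0 < η i) (i j : Fin q) :
    0 ≤ (η i - η j) * (deriv (fun t => J q (Function.update η i t)) (η i) -
      deriv (fun t => J q (Function.update η j t)) (η j)) := by
  rw [(hasDerivAt_J_update hη i).deriv, (hasDerivAt_J_update hη j).deriv, integral_neg,
    integral_neg, ← mul_sub, neg_sub_neg,
    ← integral_sub (integrableOn_jIntegrand_div hη i.pos j)
      (integrableOn_jIntegrand_div hη i.pos i), mul_left_comm, ← integral_const_mul]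
  refine mul_nonneg (by positivity) (setIntegral_nonneg measurableSet_Ioo fun x hx => ?_)
  have hW := jIntegrand_nonneg (η := η) Finset.univ hx.1.le
  have hi : 0 < x + η i := by linarith [hx.1, hη i]
  have hj : 0 < x + η j := by linarith [hx.1, hη j]
  have key : (η i - η j) * (jIntegrand q η Finset.univ x / (2 * (x + η j)) -
      jIntegrand q η Finset.univ x / (2 * (x + η i))) =
      jIntegrand q η Finset.univ x * (η i - η j) ^ 2 / (2 * (x + η i) * (x + η j)) := by
    field_simp
    ring
  rw [key]
  positivity

end jIntegrand

lemma rpow_neg_half_eq_div {y : ℝ} (hy : 0 < y) :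
    y ^ (-(1 : ℝ) / 2) = y / y ^ ((3 : ℝ) / 2) := by
  rw [show -(1 : ℝ) / 2 = 1 - 3 / 2 by norm_num, Real.rpow_sub hy, Real.rpow_one]

lemma hasDerivAt_add_rpow_neg_half {x a : ℝ} (ha : 0 < x + a) :
    HasDerivAt (fun a => (x + a) ^ (-(1 : ℝ) / 2))
      (-(1 / (2 * (x + a) ^ ((3 : ℝ) / 2)))) a := by
  refine (((hasDerivAt_id a).const_add x).rpow_const (p := -(1 : ℝ) / 2)
    (Or.inl ha.ne')).congr_deriv ?_
  simp only [id]
  rw [show -(1 : ℝ) / 2 - 1 = -(3 / 2) by norm_num, Real.rpow_neg ha.le]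
  field_simp

lemma schur_ostrowski_rpow_neg_half_mul_eq (x a b : ℝ) (ha : 0 < x + a) (hb : 0 < x + b) :
    (a - b) * (deriv (fun a => (x + a) ^ (-(1 : ℝ) / 2) * (x + b) ^ (-(1 : ℝ) / 2)) a -
      deriv (fun b => (x + a) ^ (-(1 : ℝ) / 2) * (x + b) ^ (-(1 : ℝ) / 2)) b) =
      (a - b) ^ 2 / (2 * (x + a) ^ ((3 : ℝ) / 2) * (x + b) ^ ((3 : ℝ) / 2)) := by
  rw [((hasDerivAt_add_rpow_neg_half ha).mul_const _).deriv,
    ((hasDerivAt_add_rpow_neg_half hb).const_mul _).deriv, rpow_neg_half_eq_div ha,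
    rpow_neg_half_eq_div hb]
  have : 0 < (x + a) ^ ((3 : ℝ) / 2) := by positivity
  have : 0 < (x + b) ^ ((3 : ℝ) / 2) := by positivity
  field_simp
  ring

/-- The Schur–Ostrowski condition for `J`, together with the pointwise identity for
`J̃(a, b) = (x+a)^{-1/2} (x+b)^{-1/2}`. -/
theorem stmt2 (q : ℕ) (η : Fin q → ℝ) (hη : ∀ i, 0 < η i) (i j : Fin q) :
    (0 ≤ (η i - η j) *
      (deriv (fun t => J q (Function.update η i t)) (η i) -
        deriv (fun t => J q (Function.update η j t)) (η j))) ∧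
    (∀ x : ℝ, 0 < x →
      (η i - η j) *
          (deriv (fun a => (x + a) ^ (-(1 : ℝ) / 2) * (x + η j) ^ (-(1 : ℝ) / 2)) (η i) -
            deriv (fun b => (x + η i) ^ (-(1 : ℝ) / 2) * (x + b) ^ (-(1 : ℝ) / 2)) (η j)) =
        (η i - η j) ^ 2 / (2 * (x + η i) ^ ((3 : ℝ) / 2) * (x + η j) ^ ((3 : ℝ) / 2)) ∧
      0 ≤ (η i - η j) ^ 2 / (2 * (x + η i) ^ ((3 : ℝ) / 2) * (x + η j) ^ ((3 : ℝ) / 2))) := by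
  refine ⟨J_schur_ostrowski hη i j, fun x hx => ?_⟩
  have hi : 0 < x + η i := by linarith [hη i]
  have hj : 0 < x + η j := by linarith [hη j]
  exact ⟨schur_ostrowski_rpow_neg_half_mul_eq x (η i) (η j) hi hj, by positivity⟩
end

section
/- Let Σ be an n×n positive semidefinite matrix, l ∈ ℝ^n, and W̃ an n×(q+1) real matrix. Define A = D · Ω where Ω is the (q+1)×(q+1) Gram-type matrix with blocks [[l'Σl, l'ΣW̃],[W̃'Σl, W̃'ΣW̃]] and D = diag(1, −I_q). Then all q+1 eigenvalues of A are real, and at most one of them is strictly positive (the remaining ones are ≤ 0). -/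
open Matrix Polynomial Finset

/-!
Write `Ω = Bᴴ * B`. Then `D * Ω` has the same characteristic polynomial as the symmetric matrix
`S = B * D * Bᴴ`, so its eigenvalues are real. The quadratic form of `S` is
`x ↦ (Bᴴ x)ᵀ D (Bᴴ x)`, which is `≤ 0` on the hyperplane `(Bᴴ x) i₀ = 0`. If `S` had two positive
eigenvalues, the plane spanned by their orthonormal eigenvectors would meet this hyperplane in a
nonzero vector on which the form is positive.
-/

namespace Matrix

variable {m : Type*} [Fintype m]

lemma dotProduct_mul_mul_conjTranspose_mulVec (B D : Matrix m m ℝ) (x : m → ℝ) :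
    x ⬝ᵥ ((B * D * Bᴴ) *ᵥ x) = (Bᴴ *ᵥ x) ⬝ᵥ (D *ᵥ (Bᴴ *ᵥ x)) := by
  rw [← mulVec_mulVec, ← mulVec_mulVec, dotProduct_mulVec, conjTranspose_eq_transpose_of_trivial,
    mulVec_transpose]

variable [DecidableEq m]

lemma IsHermitian.dotProduct_mulVec_eigenvectorBasis_combination {S : Matrix m m ℝ}
    (hS : S.IsHermitian) {i j : m} (hij : i ≠ j) (a b : ℝ) :
    (a • ⇑(hS.eigenvectorBasis i) + b • ⇑(hS.eigenvectorBasis j)) ⬝ᵥ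
        (S *ᵥ (a • ⇑(hS.eigenvectorBasis i) + b • ⇑(hS.eigenvectorBasis j))) =
      a ^ 2 * hS.eigenvalues i + b ^ 2 * hS.eigenvalues j := by
  have hdot (k l : m) : ⇑(hS.eigenvectorBasis k) ⬝ᵥ ⇑(hS.eigenvectorBasis l) =
      if k = l then 1 else 0 := by
    simpa [EuclideanSpace.inner_eq_star_dotProduct, dotProduct_comm] using
      orthonormal_iff_ite.mp hS.eigenvectorBasis.orthonormal k l
  simp only [mulVec_add, mulVec_smul, hS.mulVec_eigenvectorBasis, add_dotProduct, dotProduct_add,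
    smul_dotProduct, dotProduct_smul, hdot, if_neg hij, if_neg hij.symm, if_pos, smul_eq_mul]
  ring

lemma IsHermitian.card_eigenvalues_pos_le_one {S : Matrix m m ℝ} (hS : S.IsHermitian)
    (f : (m → ℝ) →ₗ[ℝ] ℝ) (hf : ∀ x, f x = 0 → x ⬝ᵥ (S *ᵥ x) ≤ 0) :
    #{i | 0 < hS.eigenvalues i} ≤ 1 := by
  refine Finset.card_le_one.mpr fun i hi j hj => by_contra fun hij => ?_
  simp only [Finset.mem_filter, Finset.mem_univ, true_and] at hi hj
  set v := ⇑(hS.eigenvectorBasis i)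
  set w := ⇑(hS.eigenvectorBasis j)
  have hcomb := hf (f w • v + (-f v) • w) <| by
    simp only [neg_smul, map_add, map_smul, smul_eq_mul, map_neg]
    ring
  rw [hS.dotProduct_mulVec_eigenvectorBasis_combination hij] at hcomb
  have hfv : f v = 0 := by
    rw [neg_sq] at hcomb
    have hsq : f v ^ 2 * hS.eigenvalues j ≤ 0 := by nlinarith [mul_nonneg (sq_nonneg (f w)) hi.le]
    exact pow_eq_zero_iff two_ne_zero |>.mp <|
      le_antisymm (nonpos_of_mul_nonpos_left hsq hj) (sq_nonneg _)
  have hv := hf ((1 : ℝ) • v + (0 : ℝ) • w) (by simp [hfv])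
  rw [hS.dotProduct_mulVec_eigenvectorBasis_combination hij] at hv
  linarith

lemma IsHermitian.roots_charpoly_map_complex {S : Matrix m m ℝ} (hS : S.IsHermitian) :
    (S.map (algebraMap ℝ ℂ)).charpoly.roots = univ.val.map fun i => (hS.eigenvalues i : ℂ) := by
  rw [charpoly_map, hS.charpoly_eq, Polynomial.map_prod, Polynomial.roots_prod]
  · simp
  · simp [Finset.prod_ne_zero_iff, Polynomial.X_sub_C_ne_zero]

lemma dotProduct_diagonal_sign_mulVec_nonpos {i₀ : m} {y : m → ℝ} (hy : y i₀ = 0) :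
    y ⬝ᵥ (diagonal (fun i => if i = i₀ then (1 : ℝ) else -1) *ᵥ y) ≤ 0 := by
  simp only [dotProduct, mulVec_diagonal]
  refine Finset.sum_nonpos fun i _ => ?_
  by_cases hi : i = i₀
  · simp [hi, hy]
  · simp only [if_neg hi]
    nlinarith [sq_nonneg (y i)]

lemma exists_isHermitian_charpoly_eq_diagonal_sign_mul {Ω : Matrix m m ℝ} (hΩ : Ω.PosSemidef)
    (i₀ : m) : ∃ (S : Matrix m m ℝ) (hS : S.IsHermitian),
      (diagonal (fun i => if i = i₀ then (1 : ℝ) else -1) * Ω).charpoly = S.charpoly ∧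
      #{i | 0 < hS.eigenvalues i} ≤ 1 := by
  set D := diagonal (fun i => if i = i₀ then (1 : ℝ) else -1)
  obtain ⟨B, rfl⟩ : ∃ B : Matrix m m ℝ, Ω = star B * B := by
    open scoped MatrixOrder in
    exact CStarAlgebra.nonneg_iff_eq_star_mul_self.mp hΩ.nonneg
  have hS := isHermitian_mul_mul_conjTranspose B (isHermitian_diagonal _ : D.IsHermitian)
  refine ⟨_, hS, ?_, hS.card_eigenvalues_pos_le_one (LinearMap.proj i₀ ∘ₗ (Bᴴ).mulVecLin) ?_⟩
  · rw [star_eq_conjTranspose, ← mul_assoc, charpoly_mul_comm, ← mul_assoc]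
  · intro x hx
    rw [dotProduct_mul_mul_conjTranspose_mulVec]
    exact dotProduct_diagonal_sign_mulVec_nonpos hx

end Matrix

theorem stmt5_general (q : ℕ)
    (Ω : Matrix (Fin (q + 1)) (Fin (q + 1)) ℝ)
    (hpd : Ω.PosDef)
    (D A : Matrix (Fin (q + 1)) (Fin (q + 1)) ℝ)
    (hD : D = Matrix.diagonal (fun i => if i = 0 then (1 : ℝ) else -1))
    (hA : A = D * Ω) :
    (∀ z ∈ ((A.map (algebraMap ℝ ℂ)).charpoly).roots, z.im = 0) ∧
    Multiset.card (((A.map (algebraMap ℝ ℂ)).charpoly).roots.filter fun z => 0 < z.re) ≤ 1 := by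
  obtain ⟨S, hS, hcharpoly, hpos⟩ :=
    exists_isHermitian_charpoly_eq_diagonal_sign_mul hpd.posSemidef 0
  have hroots : (A.map (algebraMap ℝ ℂ)).charpoly.roots =
      univ.val.map fun i => (hS.eigenvalues i : ℂ) := by
    rw [charpoly_map, hA, hD, hcharpoly, ← charpoly_map, hS.roots_charpoly_map_complex]
  rw [hroots]
  refine ⟨by simp, ?_⟩
  rw [Multiset.filter_map, Multiset.card_map]
  rw [Finset.card_def, Finset.filter_val] at hpos
  convert hpos using 3
  simp

/-- Let `Σ` be `n × n` PSD, `l ∈ ℝⁿ`, `W` be `n × q`, and form the `(q+1) × (q+1)` matrix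
`Ω = W₀' Σ W₀` (blocks `[[l'Σl, l'ΣW],[W'Σl, W'ΣW]]`) where `W₀ = [l, W]`, assumed positive
definite. With `D = diag(1, -I_q)` and `A = D * Ω`, all `q+1` eigenvalues of `A` (roots of the
characteristic polynomial over `ℂ`) are real, and at most one of them is strictly positive. -/
theorem stmt5 (n q : ℕ) (Sig : Matrix (Fin n) (Fin n) ℝ) (hSig : Sig.PosSemidef)
    (l : Fin n → ℝ) (W : Matrix (Fin n) (Fin q) ℝ)
    (W₀ : Matrix (Fin n) (Fin (q + 1)) ℝ)
    (hW₀l : ∀ r, W₀ r 0 = l r)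
    (hW₀W : ∀ (r : Fin n) (i : Fin q), W₀ r i.succ = W r i)
    (Ω : Matrix (Fin (q + 1)) (Fin (q + 1)) ℝ)
    (hΩ : Ω = W₀ᵀ * Sig * W₀) (hpd : Ω.PosDef)
    (D A : Matrix (Fin (q + 1)) (Fin (q + 1)) ℝ)
    (hD : D = Matrix.diagonal (fun i => if i = 0 then (1 : ℝ) else -1))
    (hA : A = D * Ω) :
    (∀ z ∈ ((A.map (algebraMap ℝ ℂ)).charpoly).roots, z.im = 0) ∧
    Multiset.card (((A.map (algebraMap ℝ ℂ)).charpoly).roots.filter fun z => 0 < z.re) ≤ 1 :=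
  stmt5_general q Ω hpd D A hD hA
end

section
/- If X_n | s_n ⇒_p X (weak convergence in probability of conditional laws) and Y_n → 0 in probability, then (X_n + Y_n) | s_n ⇒_p X. -/
/-!
Averaging the hypothesis gives `E h(Xₙ) → E h(X)`, i.e. `Xₙ → X` in distribution, so by Slutsky
`(Xₙ, Yₙ) → (X, 0)` in distribution and therefore `E |h(Xₙ + Yₙ) - h(Xₙ)| → 0`, since
`(x, y) ↦ |h(x + y) - h(x)|` is bounded and continuous. Conditional expectation is an `L¹`
contraction, so `E[h(Xₙ + Yₙ) - h(Xₙ) | sₙ] → 0` in probability, and adding it to `E[h(Xₙ) | sₙ]`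
gives the claim.
-/

open MeasureTheory ProbabilityTheory Filter Topology

namespace MeasureTheory

variable {Ω : Type*} {mΩ : MeasurableSpace Ω} {μ : Measure Ω}

theorem TendstoInMeasure.add {ι E : Type*} [SeminormedAddCommGroup E] {l : Filter ι}
    {f g : ι → Ω → E} {f₀ g₀ : Ω → E}
    (hf : TendstoInMeasure μ f l f₀) (hg : TendstoInMeasure μ g l g₀) :
    TendstoInMeasure μ (f + g) l (f₀ + g₀) := by
  rw [tendstoInMeasure_iff_norm] at hf hg ⊢
  intro ε hε
  have hsplit : ∀ i, μ {ω | ε ≤ ‖(f + g) i ω - (f₀ + g₀) ω‖} ≤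
      μ {ω | ε / 2 ≤ ‖f i ω - f₀ ω‖} + μ {ω | ε / 2 ≤ ‖g i ω - g₀ ω‖} := by
    refine fun i => (measure_mono fun ω hω => ?_).trans (measure_union_le _ _)
    by_contra! hsmall
    simp only [Set.mem_union, Set.mem_ofPred_eq, not_or, not_le, Pi.add_apply,
      add_sub_add_comm] at hω hsmall
    linarith [norm_add_le (f i ω - f₀ ω) (g i ω - g₀ ω)]
  have hsum := (hf (ε / 2) (half_pos hε)).add (hg (ε / 2) (half_pos hε))
  rw [add_zero] at hsum
  exact tendsto_of_tendsto_of_tendsto_of_le_of_le tendsto_const_nhds hsum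
    (fun _ => zero_le) hsplit

theorem TendstoInMeasure.tendsto_integral_of_dominated {E : Type*} [NormedAddCommGroup E]
    [NormedSpace ℝ E] {f : ℕ → Ω → E} {g : Ω → E} {bound : Ω → ℝ}
    (hf_meas : ∀ n, AEStronglyMeasurable (f n) μ) (h_int : Integrable bound μ)
    (h_bound : ∀ n, ∀ᵐ ω ∂μ, ‖f n ω‖ ≤ bound ω) (hfg : TendstoInMeasure μ f atTop g) :
    Tendsto (fun n => ∫ ω, f n ω ∂μ) atTop (𝓝 (∫ ω, g ω ∂μ)) := by
  refine tendsto_of_subseq_tendsto fun ns hns => ?_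
  obtain ⟨ms, -, hae⟩ := (hfg.comp hns).exists_seq_tendsto_ae
  exact ⟨ms, tendsto_integral_of_dominated_convergence bound (fun _ => hf_meas _) h_int
    (fun _ => h_bound _) hae⟩

theorem tendstoInMeasure_condExp_of_tendsto_integral_norm {ι E : Type*} [NormedAddCommGroup E]
    [NormedSpace ℝ E] [CompleteSpace E] {l : Filter ι} {m : ι → MeasurableSpace Ω}
    {f : ι → Ω → E} (hf : ∀ i, Integrable (f i) μ)
    (hlim : Tendsto (fun i => ∫ ω, ‖f i ω‖ ∂μ) l (𝓝 0)) :
    TendstoInMeasure μ (fun i => μ[f i | m i]) l 0 := by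
  refine tendstoInMeasure_of_tendsto_eLpNorm one_ne_zero
    (fun _ => integrable_condExp.aestronglyMeasurable) aestronglyMeasurable_const ?_
  have hL1 : Tendsto (fun i => eLpNorm (f i) 1 μ) l (𝓝 0) := by
    simpa [eLpNorm_one_eq_lintegral_enorm, ← ofReal_integral_norm_eq_lintegral_enorm (hf _)]
      using ENNReal.tendsto_ofReal hlim
  refine tendsto_of_tendsto_of_tendsto_of_le_of_le tendsto_const_nhds hL1 (fun _ => zero_le)
    fun i => ?_
  simpa using eLpNorm_condExp_le_eLpNorm (m := m i) (f i) le_rfl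

section Distribution

variable [IsProbabilityMeasure μ] {E : Type*} [MeasurableSpace E]

theorem tendstoInDistribution_of_tendstoInMeasure_condExp [TopologicalSpace E]
    [OpensMeasurableSpace E] {X : ℕ → Ω → E} {Z : Ω → E} {m : ℕ → MeasurableSpace Ω}
    (hm : ∀ n, m n ≤ mΩ) (hX : ∀ n, AEMeasurable (X n) μ) (hZ : AEMeasurable Z μ)
    (hconv : ∀ f : BoundedContinuousFunction E ℝ,
      TendstoInMeasure μ (fun n => μ[fun ω => f (X n ω) | m n]) atTop
        (fun _ => ∫ ω, f (Z ω) ∂μ)) :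
    TendstoInDistribution X atTop Z (fun _ => μ) μ := by
  refine ⟨hX, hZ, ProbabilityMeasure.tendsto_iff_forall_integral_tendsto.2 fun f => ?_⟩
  simp only [ProbabilityMeasure.coe_mk]
  rw [integral_map hZ f.continuous.aestronglyMeasurable]
  have hbound : ∀ n, ∀ᵐ ω ∂μ, ‖μ[fun ω => f (X n ω) | m n] ω‖ ≤ ‖f‖ := fun n =>
    ae_bdd_abs_condExp_of_ae_bdd_abs (ae_of_all _ fun ω => f.norm_coe_le_norm (X n ω))
  have := (hconv f).tendsto_integral_of_dominated
    (fun _ => integrable_condExp.aestronglyMeasurable) (integrable_const _) hbound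
  simp only [integral_const, probReal_univ, one_smul, integral_condExp (hm _)] at this
  refine this.congr fun n => ?_
  rw [integral_map (hX n) f.continuous.aestronglyMeasurable]

theorem TendstoInDistribution.tendsto_integral_norm_comp_add_sub {ι : Type*} [NormedAddCommGroup E]
    [SecondCountableTopology E] [BorelSpace E] {l : Filter ι} [l.IsCountablyGenerated]
    {X Y : ι → Ω → E} {Z : Ω → E} (hX : TendstoInDistribution X l Z (fun _ => μ) μ)
    (hY : TendstoInMeasure μ Y l (fun _ => 0)) (hY_meas : ∀ i, AEMeasurable (Y i) μ)
    (f : BoundedContinuousFunction E ℝ) :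
    Tendsto (fun i => ∫ ω, ‖f (X i ω + Y i ω) - f (X i ω)‖ ∂μ) l (𝓝 0) := by
  let G : BoundedContinuousFunction (E × E) ℝ :=
    |f.compContinuous ⟨fun q => q.1 + q.2, by fun_prop⟩ - f.compContinuous ⟨Prod.fst, by fun_prop⟩|
  have hpair := hX.prodMk_of_tendstoInMeasure_const X Y Z hY hY_meas
  have := ProbabilityMeasure.tendsto_iff_forall_integral_tendsto.1 hpair.tendsto G
  simp only [ProbabilityMeasure.coe_mk,
    integral_map (hpair.forall_aemeasurable _) G.continuous.aestronglyMeasurable,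
    integral_map hpair.aemeasurable_limit G.continuous.aestronglyMeasurable] at this
  simpa [G] using this

end Distribution

end MeasureTheory

/-- If `Xₙ | sₙ ⇒_p X` (i.e. for every bounded continuous `h`, `E[h(Xₙ) | sₙ] → E[h(X)]` in
probability) and `Yₙ → 0` in probability, then `(Xₙ + Yₙ) | sₙ ⇒_p X`. -/
theorem stmt7 {Ω : Type*} [mΩ : MeasurableSpace Ω] (μ : Measure Ω) [IsProbabilityMeasure μ]
    (p : ℕ) (X Y : ℕ → Ω → (Fin p → ℝ)) (Xlim : Ω → (Fin p → ℝ))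
    (m : ℕ → MeasurableSpace Ω) (hm : ∀ n, m n ≤ mΩ)
    (hXmeas : ∀ n, Measurable (X n)) (hYmeas : ∀ n, Measurable (Y n))
    (hXlimmeas : Measurable Xlim)
    (hconv : ∀ h : BoundedContinuousFunction (Fin p → ℝ) ℝ,
      TendstoInMeasure μ (fun n => μ[fun ω => h (X n ω) | m n]) atTop
        (fun _ => ∫ ω, h (Xlim ω) ∂μ))
    (hY0 : TendstoInMeasure μ Y atTop (fun _ => (0 : Fin p → ℝ))) :
    ∀ h : BoundedContinuousFunction (Fin p → ℝ) ℝ,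
      TendstoInMeasure μ (fun n => μ[fun ω => h (X n ω + Y n ω) | m n]) atTop
        (fun _ => ∫ ω, h (Xlim ω) ∂μ) := by
  intro h
  have hXd := tendstoInDistribution_of_tendstoInMeasure_condExp hm
    (fun n => (hXmeas n).aemeasurable) hXlimmeas.aemeasurable hconv
  have hdiff := hXd.tendsto_integral_norm_comp_add_sub hY0 (fun n => (hYmeas n).aemeasurable) h
  have hint : ∀ Z : Ω → Fin p → ℝ, Measurable Z → Integrable (fun ω => h (Z ω)) μ :=
    fun Z hZ => .of_bound (h.continuous.measurable.comp hZ).aestronglyMeasurable ‖h‖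
      (ae_of_all _ fun ω => h.norm_coe_le_norm (Z ω))
  have hint_diff n := (hint _ ((hXmeas n).add (hYmeas n))).sub (hint _ (hXmeas n))
  have hcorr := tendstoInMeasure_condExp_of_tendsto_integral_norm (m := m) hint_diff hdiff
  refine ((hconv h).add hcorr).congr (fun n => ?_) (.of_eq (add_zero _))
  refine (condExp_add (hint _ (hXmeas n)) (hint_diff n) (m n)).symm.trans (.of_eq ?_)
  congr 1
  exact add_sub_cancel _ _
end
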